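/- Let S ∈ ℝ^N with S ≠ 0 and let {i, j} be a strategic set of two nodes. Then there exists k ∈ {i, j} such that Φ_k does not vanish identically on any nonempty open subinterval of (0, ∞); in particular the zero set of Φ_k in (0, T) has Lebesgue measure zero. -/

import Mathlib

/-!
Since the `vⁿ` form an orthonormal basis and `S ≠ 0`, some mode has `⟨S, vⁿ⁰⟩ ≠ 0`, and as
`{i, j}` is strategic there is `k ∈ {i, j}` with `vⁿ⁰_k ≠ 0`. The derivative of `Φ_k` is
`Σₙ ⟨S, vⁿ⟩ vⁿ_k cos (ωₙ t)`, and cosines with distinct squared frequencies are linearly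
independent: differentiating twice multiplies the coefficients by `-ωₙ²`, so evaluating all even
derivatives at `0` yields a Vandermonde system in the `ωₙ²`. Hence `Φ_k ≢ 0`, and `Φ_k` is
real-analytic, so by the identity theorem it vanishes on no interval and its zeros form a
discrete, hence null, set.
-/

open Matrix Set MeasureTheory

/-- `Φ_k(t) = ⟨S, v¹⟩ t v¹_k + Σ_{n=2}^N (⟨S, vⁿ⟩/ω_n) sin(ω_n t) vⁿ_k`. -/
noncomputable def Phi {N : ℕ} (hN : 2 ≤ N) (ω : Fin N → ℝ) (v : Fin N → Fin N → ℝ)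
    (S : Fin N → ℝ) (k : Fin N) (t : ℝ) : ℝ :=
  (S ⬝ᵥ v ⟨0, by omega⟩) * t * v ⟨0, by omega⟩ k
    + ∑ n ∈ Finset.univ.filter (fun n : Fin N => n ≠ ⟨0, by omega⟩),
        (S ⬝ᵥ v n) / ω n * Real.sin (ω n * t) * v n k

open Real

theorem eq_zero_of_forall_dotProduct_eq_zero_of_orthonormal {R ι : Type*} [CommRing R]
    [Fintype ι] [DecidableEq ι] {v : ι → ι → R}
    (horth : ∀ i j, v i ⬝ᵥ v j = if i = j then 1 else 0) {x : ι → R}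
    (hx : ∀ i, x ⬝ᵥ v i = 0) : x = 0 := by
  have hvvT : of v * (of v)ᵀ = 1 := by
    ext i j
    exact (horth i j).trans one_apply.symm
  have hvx : of v *ᵥ x = 0 := funext fun i => (dotProduct_comm _ _).trans (hx i)
  calc x = (of v)ᵀ *ᵥ (of v *ᵥ x) := by rw [mulVec_mulVec, mul_eq_one_comm.mp hvvT, one_mulVec]
    _ = 0 := by rw [hvx, mulVec_zero]

theorem hasDerivAt_sum_mul_cos {ι : Type*} (s : Finset ι) (b ω : ι → ℝ) (t : ℝ) :
    HasDerivAt (fun t => ∑ n ∈ s, b n * cos (ω n * t))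
      (∑ n ∈ s, -(b n * ω n) * sin (ω n * t)) t :=
  HasDerivAt.fun_sum fun n _ =>
    (((hasDerivAt_id t).const_mul (ω n)).cos.const_mul (b n)).congr_deriv
      (by simp only [id, mul_one]; ring)

theorem hasDerivAt_sum_mul_sin {ι : Type*} (s : Finset ι) (b ω : ι → ℝ) (t : ℝ) :
    HasDerivAt (fun t => ∑ n ∈ s, b n * sin (ω n * t))
      (∑ n ∈ s, b n * ω n * cos (ω n * t)) t :=
  HasDerivAt.fun_sum fun n _ =>
    (((hasDerivAt_id t).const_mul (ω n)).sin.const_mul (b n)).congr_deriv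
      (by simp only [id, mul_one]; ring)

theorem eq_zero_of_hasDerivAt_of_forall_eq_zero {f f' : ℝ → ℝ} (hf : ∀ t, HasDerivAt f (f' t) t)
    (h : ∀ t, f t = 0) (t : ℝ) : f' t = 0 := by
  rw [show f = fun _ => 0 from funext h] at hf
  exact (hf t).unique (hasDerivAt_const t 0)

theorem sum_mul_neg_sq_mul_cos_eq_zero {ι : Type*} (s : Finset ι) (b ω : ι → ℝ)
    (h : ∀ t, ∑ n ∈ s, b n * cos (ω n * t) = 0) (t : ℝ) :
    ∑ n ∈ s, b n * -(ω n ^ 2) * cos (ω n * t) = 0 := by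
  have hsin := eq_zero_of_hasDerivAt_of_forall_eq_zero (hasDerivAt_sum_mul_cos s b ω) h
  rw [← eq_zero_of_hasDerivAt_of_forall_eq_zero (hasDerivAt_sum_mul_sin s _ ω) hsin t]
  exact Finset.sum_congr rfl fun n _ => by ring

theorem eq_zero_of_forall_sum_mul_cos_eq_zero {m : ℕ} {b ω : Fin m → ℝ}
    (hω : Function.Injective fun n => ω n ^ 2) (h : ∀ t, ∑ n, b n * cos (ω n * t) = 0) :
    b = 0 := by
  have hiter : ∀ p : ℕ, ∀ t, ∑ n, b n * (-(ω n ^ 2)) ^ p * cos (ω n * t) = 0 := by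
    intro p
    induction p with
    | zero => simpa using h
    | succ p ih => simpa only [pow_succ, mul_assoc] using sum_mul_neg_sq_mul_cos_eq_zero _ _ ω ih
  refine eq_zero_of_forall_pow_sum_mul_pow_eq_zero (f := fun n => -(ω n ^ 2))
    (neg_injective.comp hω) fun p => ?_
  simpa using hiter p 0

theorem hasDerivAt_Phi {N : ℕ} (hN : 2 ≤ N) {ω : Fin N → ℝ} (hω0 : ω ⟨0, by omega⟩ = 0)
    (hω : ∀ n ≠ ⟨0, by omega⟩, ω n ≠ 0) (v : Fin N → Fin N → ℝ) (S : Fin N → ℝ) (k : Fin N)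
    (t : ℝ) : HasDerivAt (Phi hN ω v S k) (∑ n, (S ⬝ᵥ v n) * v n k * cos (ω n * t)) t := by
  set z : Fin N := ⟨0, by omega⟩
  rw [← Finset.add_sum_erase _ _ (Finset.mem_univ z), ← Finset.filter_ne', hω0, zero_mul, cos_zero,
    mul_one]
  have hsin : ∀ n ∈ Finset.univ.filter (· ≠ z), HasDerivAt
      (fun t => (S ⬝ᵥ v n) / ω n * sin (ω n * t) * v n k) ((S ⬝ᵥ v n) * v n k * cos (ω n * t)) t :=
    fun n hn => ((((hasDerivAt_id t).const_mul (ω n)).sin.const_mul _).mul_const _).congr_deriv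
      (by simp only [id]; field_simp [hω n (Finset.mem_filter.mp hn).2])
  exact ((((hasDerivAt_id t).const_mul _).mul_const _).add (HasDerivAt.fun_sum hsin)).congr_deriv
    (by rw [mul_one])

theorem analyticOnNhd_Phi {N : ℕ} (hN : 2 ≤ N) (ω : Fin N → ℝ) (v : Fin N → Fin N → ℝ)
    (S : Fin N → ℝ) (k : Fin N) : AnalyticOnNhd ℝ (Phi hN ω v S k) univ := by
  intro t _
  unfold Phi
  fun_prop

section Analytic

variable {E : Type*} [NormedAddCommGroup E] [NormedSpace ℝ E] {f : ℝ → E}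

theorem AnalyticOnNhd.eq_zero_of_eqOn_zero_Ioo (hf : AnalyticOnNhd ℝ f univ) {a b : ℝ}
    (hab : a < b) (h : EqOn f 0 (Ioo a b)) : f = 0 := by
  obtain ⟨c, hc⟩ := nonempty_Ioo.mpr hab
  funext t
  exact hf.eqOn_zero_of_preconnected_of_eventuallyEq_zero isPreconnected_univ (mem_univ c)
    (Filter.eventuallyEq_of_mem (isOpen_Ioo.mem_nhds hc) h) (mem_univ t)

theorem AnalyticOnNhd.volume_setOf_eq_zero (hf : AnalyticOnNhd ℝ f univ) (h : f ≠ 0) :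
    volume {t | f t = 0} = 0 := by
  have hne : ∀ᶠ t in Filter.codiscreteWithin univ, f t ≠ 0 :=
    (hf.eqOn_zero_or_eventually_ne_zero_of_preconnected isPreconnected_univ).resolve_left
      fun h0 => h (funext fun t => h0 (mem_univ t))
  have hae := ae_restrict_le_codiscreteWithin (μ := volume) MeasurableSet.univ hne
  rw [Measure.restrict_univ] at hae
  simpa using ae_iff.mp hae

end Analytic

/-- If `S ≠ 0` and `{i, j}` is strategic, then for `k = i` or `k = j` the function `Φ_k` does
not vanish identically on any nonempty open subinterval of `(0, ∞)`; in particular its zero set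
in `(0, T)` has Lebesgue measure zero. -/
theorem Phi_nonvanishing_strategic
    {N : ℕ} (hN : 2 ≤ N)
    (ω : Fin N → ℝ) (v : Fin N → Fin N → ℝ)
    (hω0 : ω ⟨0, by omega⟩ = 0) (hωmono : StrictMono ω)
    (horth : ∀ n m : Fin N, v n ⬝ᵥ v m = if n = m then 1 else 0)
    (S : Fin N → ℝ) (hS : S ≠ 0)
    (i j : Fin N)
    (hstrat : ∀ n : Fin N, v n i ≠ 0 ∨ v n j ≠ 0)
    (T : ℝ) :
    ∃ k ∈ ({i, j} : Set (Fin N)),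
      (∀ a b : ℝ, 0 ≤ a → a < b → ¬ ∀ t ∈ Ioo a b, Phi hN ω v S k t = 0) ∧
      volume {t ∈ Ioo (0:ℝ) T | Phi hN ω v S k t = 0} = 0 := by
  obtain ⟨n₀, hn₀⟩ : ∃ n, S ⬝ᵥ v n ≠ 0 := by
    by_contra! h
    exact hS (eq_zero_of_forall_dotProduct_eq_zero_of_orthonormal horth h)
  obtain ⟨k, hk, hvk⟩ : ∃ k ∈ ({i, j} : Set (Fin N)), v n₀ k ≠ 0 := by
    rcases hstrat n₀ with h | h
    · exact ⟨i, by simp, h⟩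
    · exact ⟨j, by simp, h⟩
  have hω_nonneg : ∀ n, 0 ≤ ω n := fun n => hω0 ▸ hωmono.monotone (Fin.mk_le_mk.mpr n.1.zero_le)
  have hsq_inj : Function.Injective fun n => ω n ^ 2 := fun n m h =>
    hωmono.injective ((sq_eq_sq₀ (hω_nonneg n) (hω_nonneg m)).mp h)
  have hΦ_ne : Phi hN ω v S k ≠ 0 := by
    intro h
    have hcoeff := eq_zero_of_forall_sum_mul_cos_eq_zero hsq_inj
      (eq_zero_of_hasDerivAt_of_forall_eq_zero
        (hasDerivAt_Phi hN hω0 (fun n hn => hω0 ▸ hωmono.injective.ne hn) v S k)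
        (congrFun h))
    exact mul_ne_zero hn₀ hvk (congrFun hcoeff n₀)
  have hΦ := analyticOnNhd_Phi hN ω v S k
  exact ⟨k, hk, fun a b _ hab h => hΦ_ne (hΦ.eq_zero_of_eqOn_zero_Ioo hab h),
    measure_mono_null (fun t ht => ht.2) (hΦ.volume_setOf_eq_zero hΦ_ne)⟩
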